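/- Let d ≥ 1 and ε > 0. The regularization ρ_ε : ℝ^d → ℝ is differentiable at every point, and its gradient α_ε(z) = ∇ρ_ε(z) satisfies ‖α_ε(z)‖ ≤ 1 for every z ∈ ℝ^d. -/

import Mathlib

open scoped RealInnerProductSpace

noncomputable def rhoEps (d : ℕ) (ε : ℝ) (z : EuclideanSpace ℝ (Fin d)) : ℝ :=
  if ε ≤ ‖z‖ then ‖z‖ - (1 - 2 / Real.pi) * ε
  else (2 * ε / Real.pi) * (1 - Real.cos (Real.pi * ‖z‖ / (2 * ε)))

/-!
`ρ_ε(z) = f(‖z‖)` for a profile `f` with `f'(r) = sin (π min(r, ε) / (2ε))`: the two branches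
meet at `r = ε` with value `2ε/π` and slope `1`. Hence `f` is `1`-Lipschitz, and so is `ρ_ε`,
which bounds its gradient by `1`. Away from the origin `ρ_ε` is differentiable by the chain
rule; at the origin `f(r) = O(r²)` because `1 - cos x ≤ x² / 2`, so `ρ_ε` has derivative `0`.
-/

open Real Filter Asymptotics Set Topology

theorem HasDerivAt.ite_le {F : Type*} [NormedAddCommGroup F] [NormedSpace ℝ F]
    {f g : ℝ → F} {f' : F} {a : ℝ} (hf : HasDerivAt f f' a) (hg : HasDerivAt g f' a)
    (hfg : f a = g a) : HasDerivAt (fun x => if a ≤ x then f x else g x) f' a := by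
  have hright : HasDerivWithinAt (fun x => if a ≤ x then f x else g x) f' (Ici a) a :=
    hf.hasDerivWithinAt.congr (fun x hx => if_pos hx) (if_pos le_rfl)
  have hleft : HasDerivWithinAt (fun x => if a ≤ x then f x else g x) f' (Iic a) a := by
    refine hg.hasDerivWithinAt.congr (fun x hx => ?_) (by simp [hfg])
    rcases (mem_Iic.mp hx).eq_or_lt with rfl | hlt
    · simp [hfg]
    · exact if_neg hlt.not_ge
  simpa [Iic_union_Ici] using hleft.union hright

theorem norm_gradient_le_of_lipschitzWith
    {F : Type*} [NormedAddCommGroup F] [InnerProductSpace ℝ F] [CompleteSpace F]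
    {f : F → ℝ} {C : NNReal} (hf : LipschitzWith C f) (x : F) : ‖gradient f x‖ ≤ C := by
  rw [gradient, LinearIsometryEquiv.norm_map]
  exact norm_fderiv_le_of_lipschitz ℝ hf

/-- `rhoEps d ε` is definitionally `fun z => rhoProfile ε ‖z‖`. -/
noncomputable def rhoProfile (ε r : ℝ) : ℝ :=
  if ε ≤ r then r - (1 - 2 / π) * ε
  else (2 * ε / π) * (1 - cos (π * r / (2 * ε)))

section Profile

variable {ε : ℝ}

theorem hasDerivAt_rhoProfile_inner (hε : ε ≠ 0) (r : ℝ) :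
    HasDerivAt (fun r => (2 * ε / π) * (1 - cos (π * r / (2 * ε))))
      (sin (π * r / (2 * ε))) r := by
  have h := (((hasDerivAt_id r).const_mul π).div_const (2 * ε)).cos.const_sub 1
    |>.const_mul (2 * ε / π)
  refine h.congr_deriv ?_
  simp only [id, mul_one]
  field_simp [pi_ne_zero]

theorem hasDerivAt_rhoProfile (hε : 0 < ε) (r : ℝ) :
    HasDerivAt (rhoProfile ε) (sin (π * min r ε / (2 * ε))) r := by
  have hjunction : π * ε / (2 * ε) = π / 2 := by field_simp
  have houter (s : ℝ) : HasDerivAt (fun r => r - (1 - 2 / π) * ε) 1 s :=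
    (hasDerivAt_id s).sub_const _
  rcases lt_trichotomy r ε with hlt | rfl | hgt
  · rw [min_eq_left hlt.le]
    refine (hasDerivAt_rhoProfile_inner hε.ne' r).congr_of_eventuallyEq ?_
    filter_upwards [Iio_mem_nhds hlt] with s hs
    exact if_neg (not_le.mpr hs)
  · rw [min_self, hjunction, sin_pi_div_two]
    refine (houter r).ite_le ?_ ?_
    · simpa [hjunction] using hasDerivAt_rhoProfile_inner hε.ne' r
    · rw [hjunction, cos_pi_div_two]
      field_simp
      ring
  · rw [min_eq_right hgt.le, hjunction, sin_pi_div_two]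
    refine (houter r).congr_of_eventuallyEq ?_
    filter_upwards [Ioi_mem_nhds hgt] with s hs
    exact if_pos hs.le

theorem lipschitzWith_rhoProfile (hε : 0 < ε) : LipschitzWith 1 (rhoProfile ε) := by
  refine lipschitzWith_of_nnnorm_deriv_le
    (fun r => (hasDerivAt_rhoProfile hε r).differentiableAt) fun r => ?_
  rw [(hasDerivAt_rhoProfile hε r).deriv, ← NNReal.coe_le_coe, coe_nnnorm]
  exact abs_sin_le_one _

theorem rhoProfile_isBigO_sq (hε : 0 < ε) : rhoProfile ε =O[𝓝 0] fun r => r ^ 2 := by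
  refine IsBigO.of_bound (π / (4 * ε)) ?_
  filter_upwards [Iio_mem_nhds hε] with r hr
  have hcos : 1 - cos (π * r / (2 * ε)) ≤ (π * r / (2 * ε)) ^ 2 / 2 := by
    linarith [one_sub_sq_div_two_le_cos (x := π * r / (2 * ε))]
  have hnonneg : 0 ≤ 2 * ε / π * (1 - cos (π * r / (2 * ε))) := by
    have := cos_le_one (π * r / (2 * ε))
    have := pi_pos
    positivity
  rw [rhoProfile, if_neg (not_le.mpr hr), norm_of_nonneg hnonneg, norm_pow, norm_eq_abs, sq_abs]
  calc 2 * ε / π * (1 - cos (π * r / (2 * ε)))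
      ≤ 2 * ε / π * ((π * r / (2 * ε)) ^ 2 / 2) := by gcongr
    _ = π / (4 * ε) * r ^ 2 := by field_simp; ring

end Profile

section Radial

variable {E : Type*} [NormedAddCommGroup E] {ε : ℝ}

theorem hasFDerivAt_rhoProfile_norm_zero [NormedSpace ℝ E] (hε : 0 < ε) :
    HasFDerivAt (fun x : E => rhoProfile ε ‖x‖) (0 : E →L[ℝ] ℝ) 0 := by
  refine IsBigO.hasFDerivAt (n := 2) ?_ one_lt_two
  simp only [sub_zero]
  exact (rhoProfile_isBigO_sq hε).comp_tendsto tendsto_norm_zero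

theorem differentiableAt_rhoProfile_norm [InnerProductSpace ℝ E] (hε : 0 < ε) (x : E) :
    DifferentiableAt ℝ (fun x : E => rhoProfile ε ‖x‖) x := by
  rcases eq_or_ne x 0 with rfl | hx
  · exact (hasFDerivAt_rhoProfile_norm_zero hε).differentiableAt
  · exact (hasDerivAt_rhoProfile hε ‖x‖).differentiableAt.comp x
      (differentiableAt_id.norm ℝ hx)

theorem lipschitzWith_rhoProfile_norm (hε : 0 < ε) :
    LipschitzWith 1 (fun x : E => rhoProfile ε ‖x‖) := by
  have h := (lipschitzWith_rhoProfile hε).comp (lipschitzWith_one_norm (E := E))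
  rw [mul_one] at h
  exact h

end Radial

theorem rhoEps_grad_norm_le_one_general (d : ℕ) (ε : ℝ) (hε : 0 < ε)
    (z : EuclideanSpace ℝ (Fin d)) :
    DifferentiableAt ℝ (rhoEps d ε) z ∧ ‖gradient (rhoEps d ε) z‖ ≤ 1 :=
  ⟨differentiableAt_rhoProfile_norm hε z,
    norm_gradient_le_of_lipschitzWith (lipschitzWith_rhoProfile_norm hε) z⟩

/-- `ρ_ε` is differentiable everywhere and its gradient
`α_ε(z) = ∇ρ_ε(z)` satisfies `‖α_ε(z)‖ ≤ 1` for every `z`. -/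
theorem rhoEps_grad_norm_le_one (d : ℕ) (hd : 1 ≤ d) (ε : ℝ) (hε : 0 < ε)
    (z : EuclideanSpace ℝ (Fin d)) :
    DifferentiableAt ℝ (rhoEps d ε) z ∧ ‖gradient (rhoEps d ε) z‖ ≤ 1 :=
  rhoEps_grad_norm_le_one_general d ε hε z
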